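/- Converse direction of the reduction from OEP to PSP: for every state assignment s on the workflow DAG G = (N, E) that satisfies the execution state constraint, the project selection A(s) = {a_i : s(n_i) ≠ S_p} ∪ {b_i : s(n_i) = S_c} is prerequisite-closed in the PSP instance φ(G), induces back the assignment s (i.e., s_{A(s)} = s), and its total profit equals −T(s). -/
import Mathlib


/-- Operator states: compute, load, prune. -/
inductive NodeState where
  | compute
  | load
  | prune
deriving DecidableEq

/-- `prereq parents p q` : project `p` is a prerequisite of project `q` in the
PSP instance `φ(G)` (projects `aᵢ = Sum.inl i`, `bᵢ = Sum.inr i`). -/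
def prereq {N : Type} [Fintype N] [DecidableEq N] (parents : N → Finset N) :
    N ⊕ N → N ⊕ N → Prop := fun p q =>
  match p, q with
  | Sum.inl i, Sum.inr j => i = j ∨ i ∈ parents j
  | _, _ => False

/-- A prerequisite-closed set of projects. -/
def PrereqClosed {N : Type} [Fintype N] [DecidableEq N] (parents : N → Finset N)
    (A : Finset (N ⊕ N)) : Prop :=
  ∀ p q : N ⊕ N, prereq parents p q → q ∈ A → p ∈ A

/-- The state assignment induced by a project selection `A`. -/
def inducedState {N : Type} [Fintype N] [DecidableEq N] (A : Finset (N ⊕ N))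
    (i : N) : NodeState :=
  if Sum.inl i ∈ A then (if Sum.inr i ∈ A then .compute else .load) else .prune

/-- The execution state constraint: every computed node has no pruned parent. -/
def ExecOK {N : Type} [Fintype N] [DecidableEq N] (parents : N → Finset N)
    (s : N → NodeState) : Prop :=
  ∀ i, s i = NodeState.compute → ∀ j ∈ parents i, s j ≠ NodeState.prune

/-- Profits of the PSP instance `φ(G)`: `p(aᵢ) = -lᵢ` and `p(bᵢ) = lᵢ - cᵢ`. -/
def profit {N : Type} [Fintype N] [DecidableEq N] (l c : N → ℝ) :
    N ⊕ N → ℝ := fun x =>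
  match x with
  | Sum.inl i => -l i
  | Sum.inr i => l i - c i

/-- The workflow run time of a state assignment:
`T(s) = Σᵢ 1[s(nᵢ)=S_c]·cᵢ + 1[s(nᵢ)=S_l]·lᵢ`. -/
def runTime {N : Type} [Fintype N] [DecidableEq N] (l c : N → ℝ)
    (s : N → NodeState) : ℝ :=
  ∑ i, ((if s i = NodeState.compute then c i else 0) +
        (if s i = NodeState.load then l i else 0))

/-- The project selection determined by a state assignment `s`:
`A(s) = {aᵢ : s(nᵢ) ≠ S_p} ∪ {bᵢ : s(nᵢ) = S_c}`. -/
def selOf {N : Type} [Fintype N] [DecidableEq N] (s : N → NodeState) :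
    Finset (N ⊕ N) :=
  ((Finset.univ.filter fun i => s i ≠ NodeState.prune).image Sum.inl) ∪
  ((Finset.univ.filter fun i => s i = NodeState.compute).image Sum.inr)

/-- Converse direction of the reduction from OEP to PSP: for
every state assignment `s` satisfying the execution state constraint, the
project selection `A(s)` is prerequisite-closed in `φ(G)`, induces back the
assignment `s`, and its total profit equals `-T(s)`. -/
theorem oep_psp_converse {N : Type} [Fintype N] [DecidableEq N]
    (parents : N → Finset N)
    (acyclic : WellFounded fun i j => i ∈ parents j)
    (l c : N → ℝ)
    (s : N → NodeState) (hs : ExecOK parents s) :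
    PrereqClosed parents (selOf s) ∧
    inducedState (selOf s) = s ∧
    (∑ x ∈ selOf s, profit l c x) = -runTime l c s := by
  have hinl : ∀ i : N, Sum.inl i ∈ selOf s ↔ s i ≠ NodeState.prune := by
    intro i
    simp [selOf]
  have hinr : ∀ i : N, Sum.inr i ∈ selOf s ↔ s i = NodeState.compute := by
    intro i
    simp [selOf]
  refine ⟨?_, ?_, ?_⟩
  · intro p q hpq hq
    match p, q with
    | Sum.inl i, Sum.inr j =>
      rcases hpq with h | h
      · subst h
        rw [hinl]
        rw [hinr] at hq
        simp [hq]
      · rw [hinl]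
        rw [hinr] at hq
        exact hs j hq i h
  · funext i
    unfold inducedState
    rcases h : s i with _ | _ | _ <;>
      simp [hinl, hinr, h]
  · have hdisj : Disjoint
        ((Finset.univ.filter fun i => s i ≠ NodeState.prune).image Sum.inl)
        ((Finset.univ.filter fun i => s i = NodeState.compute).image
          (Sum.inr : N → N ⊕ N)) := by
      simp [Finset.disjoint_left]
    rw [selOf, Finset.sum_union hdisj, Finset.sum_image (by simp),
      Finset.sum_image (by simp)]
    rw [runTime, ← Finset.sum_neg_distrib]
    rw [Finset.sum_filter, Finset.sum_filter]
    rw [← Finset.sum_add_distrib]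
    apply Finset.sum_congr rfl
    intro i _
    rcases h : s i with _ | _ | _ <;> simp [profit, h] <;> ring
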